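/- arXiv:2110.01132 — 5 statements merged into one kernel-verified Lean document; each statement's English description precedes it below -/
import Mathlib

section
/- Let U be a uniformly distributed random variable on (0,1] (i.e., consider the probability space (0,1] with Lebesgue measure). Then the sequence of digit functions X_k(u) = N(L^{k−1}(u)), k ≥ 1, is a sequence of independent, identically distributed random variables taking values in the positive integers with P(X_1 = n) = 1/(n(n+1)) for every n ≥ 1. -/
/-!
On the cylinder `{N = n} = (1/(n+1), 1/n]` the Lüroth map is the increasing affine bijection
`u ↦ n(n+1)u - n` onto `(0,1]`, so `{N = n} ∩ L⁻¹ B` has Lebesgue measure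
`|B ∩ (0,1]| / (n(n+1))`. Hence `L` preserves Lebesgue measure on `(0,1]` and the first digit
`N` is independent of `L`. For any observable `f` independent of a measure-preserving map `T`,
the process `f ∘ T^[k]` is i.i.d.: the event `{f ∈ A₀} ∩ T⁻¹ {f ∘ T^[i] ∈ Aᵢ₊₁ for i < n}`
splits off its first factor, and induction on `n` does the rest.
-/

open MeasureTheory ProbabilityTheory

/-- The digit function `N(x) = ⌊1/x⌋` of the Luroth expansion. -/
noncomputable def lurothN (x : ℝ) : ℤ := ⌊1 / x⌋

/-- The Luroth map `L(x) = N(x)((N(x)+1)x - 1)`. -/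
noncomputable def lurothL (x : ℝ) : ℝ :=
  (lurothN x) * ((lurothN x + 1) * x - 1)

/-- The digit functions `X_k(u) = N(L^{k-1}(u))`, `k ≥ 1`; here indexed by `k - 1 ∈ ℕ`. -/
noncomputable def lurothDigit (k : ℕ) (u : ℝ) : ℤ := lurothN (lurothL^[k] u)

open Set

section ShiftProcess

variable {Ω β : Type*} [MeasurableSpace Ω] [MeasurableSpace β] {μ : Measure Ω}
  {f : Ω → β} {T : Ω → Ω}

theorem identDistrib_comp_iterate (hf : Measurable f) (hT : MeasurePreserving T μ μ) (k : ℕ) :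
    IdentDistrib (f ∘ T^[k]) f μ μ where
  aemeasurable_fst := (hf.comp (hT.iterate k).measurable).aemeasurable
  aemeasurable_snd := hf.aemeasurable
  map_eq := by rw [← Measure.map_map hf (hT.iterate k).measurable, (hT.iterate k).map_eq]

theorem measure_biInter_range_preimage_comp_iterate [IsProbabilityMeasure μ] (hf : Measurable f)
    (hT : MeasurePreserving T μ μ) (hfT : IndepFun f T μ) (n : ℕ) (A : ℕ → Set β)
    (hA : ∀ i, MeasurableSet (A i)) :
    μ (⋂ i ∈ Finset.range n, (f ∘ T^[i]) ⁻¹' A i)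
      = ∏ i ∈ Finset.range n, μ (f ⁻¹' A i) := by
  induction n generalizing A with
  | zero => simp
  | succ n ih =>
    have hsplit : ⋂ i ∈ Finset.range (n + 1), (f ∘ T^[i]) ⁻¹' A i
        = f ⁻¹' A 0 ∩ T ⁻¹' ⋂ i ∈ Finset.range n, (f ∘ T^[i]) ⁻¹' A (i + 1) := by
      ext ω
      simp only [mem_iInter, mem_inter_iff, mem_preimage, Finset.mem_range, Function.comp_apply,
        Nat.forall_lt_succ_left', Function.iterate_succ_apply, Function.iterate_zero_apply]
    have hmeas : MeasurableSet (⋂ i ∈ Finset.range n, (f ∘ T^[i]) ⁻¹' A (i + 1)) :=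
      Finset.measurableSet_biInter _ fun i _ =>
        (hf.comp (hT.iterate i).measurable) (hA (i + 1))
    rw [hsplit, hfT.measure_inter_preimage_eq_mul _ _ (hA 0) hmeas, hT.measure_preimage
      hmeas.nullMeasurableSet, ih _ fun i => hA (i + 1), Finset.prod_range_succ', mul_comm]

theorem iIndepFun_comp_iterate [IsProbabilityMeasure μ] (hf : Measurable f)
    (hT : MeasurePreserving T μ μ) (hfT : IndepFun f T μ) :
    iIndepFun (fun k => f ∘ T^[k]) μ := by
  rw [iIndepFun_iff_measure_inter_preimage_eq_mul]
  intro S A hA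
  obtain ⟨n, hSn⟩ := S.exists_nat_subset_range
  classical
  set A' : ℕ → Set β := fun i => if i ∈ S then A i else univ
  have hA' : ∀ i, MeasurableSet (A' i) := fun i => by
    by_cases hi : i ∈ S <;> simp [A', hi, hA]
  have hinter :
      ⋂ i ∈ S, (f ∘ T^[i]) ⁻¹' A i = ⋂ i ∈ Finset.range n, (f ∘ T^[i]) ⁻¹' A' i := by
    ext ω
    simp only [mem_iInter, mem_preimage, Finset.mem_range, A']
    exact ⟨fun h i _ => by split_ifs with hi; exacts [h i hi, mem_univ _],
      fun h i hi => by simpa [hi] using h i (Finset.mem_range.mp (hSn hi))⟩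
  rw [hinter, measure_biInter_range_preimage_comp_iterate hf hT hfT n A' hA',
    ← Finset.prod_subset hSn fun i _ hi => by simp [A', hi]]
  refine Finset.prod_congr rfl fun i hi => ?_
  simp only [A', if_pos hi]
  exact ((identDistrib_comp_iterate hf hT i).measure_mem_eq (hA i hi)).symm

end ShiftProcess

theorem Real.volume_preimage_mul_add {a : ℝ} (ha : a ≠ 0) (b : ℝ) (s : Set ℝ) :
    volume ((fun x => a * x + b) ⁻¹' s) = ENNReal.ofReal |a⁻¹| * volume s := by
  rw [show (fun x => a * x + b) ⁻¹' s = (a * ·) ⁻¹' ((· + b) ⁻¹' s) from rfl,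
    Real.volume_preimage_mul_left ha, measure_preimage_add_right]

theorem measurable_lurothN : Measurable lurothN :=
  (measurable_const.div measurable_id).floor

theorem measurable_lurothL : Measurable lurothL := by
  have hN : Measurable fun x => (lurothN x : ℝ) := measurable_from_top.comp measurable_lurothN
  exact hN.mul (((hN.add_const 1).mul measurable_id).sub_const 1)

theorem one_le_lurothN_iff {u : ℝ} : 1 ≤ lurothN u ↔ u ∈ Ioc 0 1 := by
  rw [lurothN, Int.le_floor, Int.cast_one, one_le_div_iff]
  constructor
  · rintro (h | ⟨hu, h⟩)
    · exact h
    · linarith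
  · exact Or.inl

theorem lurothN_preimage_singleton_subset {n : ℤ} (hn : 0 < n) : lurothN ⁻¹' {n} ⊆ Ioc 0 1 :=
  fun u hu => one_le_lurothN_iff.mp (by rw [mem_preimage, mem_singleton_iff] at hu; omega)

theorem lurothN_eq_iff {n : ℤ} (hn : 0 < n) {u : ℝ} :
    lurothN u = n ↔ (n : ℝ) * ((n + 1) * u - 1) ∈ Ioc 0 1 := by
  have hn' : (0 : ℝ) < n := Int.cast_pos.mpr hn
  rw [lurothN, Int.floor_eq_iff, mem_Ioc]
  rcases le_or_gt u 0 with hu | hu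
  · have : 1 / u ≤ 0 := one_div_nonpos.mpr hu
    constructor
    · rintro ⟨h, -⟩; linarith
    · rintro ⟨h, -⟩
      have : ((n : ℝ) + 1) * u - 1 ≤ 0 := by nlinarith
      linarith [mul_nonpos_of_nonneg_of_nonpos hn'.le this]
  · rw [le_div_iff₀ hu, div_lt_iff₀ hu]
    constructor
    · rintro ⟨h₁, h₂⟩; constructor <;> nlinarith
    · rintro ⟨h₁, h₂⟩; constructor <;> nlinarith

theorem lurothN_preimage_singleton_inter_lurothL_preimage {n : ℤ} (hn : 0 < n) (B : Set ℝ) :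
    lurothN ⁻¹' {n} ∩ lurothL ⁻¹' B
      = (fun u => (n * (n + 1) : ℝ) * u + -n) ⁻¹' (Ioc 0 1 ∩ B) := by
  ext u
  have hL : (n : ℝ) * ((n + 1) * u - 1) = (n * (n + 1) : ℝ) * u + -n := by ring
  simp only [mem_inter_iff, mem_preimage, mem_singleton_iff, ← hL, ← lurothN_eq_iff hn]
  exact and_congr_right fun h => by rw [lurothL, h]

theorem volume_lurothN_preimage_singleton_inter {n : ℤ} (hn : 0 < n) (B : Set ℝ) :
    volume (lurothN ⁻¹' {n} ∩ lurothL ⁻¹' B)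
      = ENNReal.ofReal ((n * (n + 1) : ℝ)⁻¹) * volume (Ioc 0 1 ∩ B) := by
  have hpos : (0 : ℝ) < n * (n + 1) := by
    have : (0 : ℝ) < n := Int.cast_pos.mpr hn
    positivity
  rw [lurothN_preimage_singleton_inter_lurothL_preimage hn,
    Real.volume_preimage_mul_add hpos.ne', abs_of_pos (inv_pos.mpr hpos)]

theorem volume_lurothN_preimage_singleton {n : ℤ} (hn : 0 < n) :
    volume (lurothN ⁻¹' {n}) = ENNReal.ofReal ((n * (n + 1) : ℝ)⁻¹) := by
  simpa using volume_lurothN_preimage_singleton_inter hn univ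

local notation "μ₀" => Measure.restrict (volume : Measure ℝ) (Ioc 0 1)

instance : IsProbabilityMeasure μ₀ := ⟨by simp⟩

theorem restrict_lurothN_preimage_singleton_inter {B : Set ℝ} (hB : MeasurableSet B) (n : ℤ) :
    μ₀ (lurothN ⁻¹' {n} ∩ lurothL ⁻¹' B)
      = μ₀ (lurothN ⁻¹' {n}) * μ₀ B := by
  rcases le_or_gt n 0 with hn | hn
  · have hnull : μ₀ (lurothN ⁻¹' {n}) = 0 := by
      have hempty : lurothN ⁻¹' {n} ∩ Ioc 0 1 = ∅ :=
        eq_empty_of_forall_notMem fun u ⟨hu, hI⟩ => by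
          have := one_le_lurothN_iff.mpr hI
          rw [mem_preimage, mem_singleton_iff] at hu
          omega
      rw [Measure.restrict_apply' measurableSet_Ioc, hempty, measure_empty]
    rw [hnull, zero_mul]
    exact measure_mono_null inter_subset_left hnull
  · have hsub := lurothN_preimage_singleton_subset hn
    rw [Measure.restrict_eq_self _ (inter_subset_left.trans hsub), Measure.restrict_eq_self _ hsub,
      volume_lurothN_preimage_singleton_inter hn, volume_lurothN_preimage_singleton hn,
      Measure.restrict_apply hB, inter_comm]

theorem restrict_lurothN_preimage_inter {B : Set ℝ} (hB : MeasurableSet B) (A : Set ℤ) :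
    μ₀ (lurothN ⁻¹' A ∩ lurothL ⁻¹' B) = μ₀ (lurothN ⁻¹' A) * μ₀ B := by
  -- both sides are measures in `A` on the countable space `ℤ`, so singletons suffice
  have hmap : ((μ₀).restrict (lurothL ⁻¹' B)).map lurothN = μ₀ B • (μ₀).map lurothN :=
    Measure.ext_of_singleton fun n => by
      rw [Measure.map_apply measurable_lurothN (measurableSet_singleton n), Measure.smul_apply,
        Measure.map_apply measurable_lurothN (measurableSet_singleton n),
        Measure.restrict_apply (measurable_lurothN (measurableSet_singleton n)),
        restrict_lurothN_preimage_singleton_inter hB, smul_eq_mul, mul_comm]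
  have hA := DFunLike.congr_fun hmap A
  rwa [Measure.smul_apply, smul_eq_mul, Measure.map_apply measurable_lurothN .of_discrete,
    Measure.map_apply measurable_lurothN .of_discrete,
    Measure.restrict_apply (measurable_lurothN .of_discrete), mul_comm] at hA

theorem measurePreserving_lurothL : MeasurePreserving lurothL μ₀ μ₀ where
  measurable := measurable_lurothL
  map_eq := Measure.ext fun B hB => by
    rw [Measure.map_apply measurable_lurothL hB]
    simpa using restrict_lurothN_preimage_inter hB univ

theorem indepFun_lurothN_lurothL : IndepFun lurothN lurothL μ₀ := by
  rw [indepFun_iff_measure_inter_preimage_eq_mul]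
  intro A B _ hB
  rw [restrict_lurothN_preimage_inter hB,
    measurePreserving_lurothL.measure_preimage hB.nullMeasurableSet]

/-- For `U` uniform on `(0,1]`, the Luroth digits `X_k(U) = N(L^{k-1}(U))` form an IID
sequence of positive-integer valued random variables with
`P(X_1 = n) = 1/(n(n+1))` for all `n ≥ 1`. -/
theorem lurothDigits_iid :
    iIndepFun lurothDigit (volume.restrict (Set.Ioc (0 : ℝ) 1)) ∧
    (∀ k : ℕ,
      (volume.restrict (Set.Ioc (0 : ℝ) 1)) {u : ℝ | 1 ≤ lurothDigit k u} = 1) ∧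
    (∀ k : ℕ, ∀ n : ℕ, 1 ≤ n →
      (volume.restrict (Set.Ioc (0 : ℝ) 1)) {u : ℝ | lurothDigit k u = (n : ℤ)}
        = ENNReal.ofReal (1 / (n * (n + 1)))) := by
  have hdigit (k : ℕ) : IdentDistrib (lurothDigit k) lurothN μ₀ μ₀ :=
    identDistrib_comp_iterate measurable_lurothN measurePreserving_lurothL k
  refine ⟨iIndepFun_comp_iterate measurable_lurothN measurePreserving_lurothL
    indepFun_lurothN_lurothL, fun k => ?_, fun k n hn => ?_⟩
  · have hIci : lurothN ⁻¹' Ici 1 = Ioc 0 1 := ext fun _ => one_le_lurothN_iff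
    change μ₀ (lurothDigit k ⁻¹' Ici 1) = 1
    rw [(hdigit k).measure_mem_eq measurableSet_Ici, hIci]
    simp
  · have hn' : (0 : ℤ) < n := by omega
    change μ₀ (lurothDigit k ⁻¹' {(n : ℤ)}) = _
    rw [(hdigit k).measure_mem_eq (measurableSet_singleton _),
      Measure.restrict_eq_self _ (lurothN_preimage_singleton_subset hn'),
      volume_lurothN_preimage_singleton hn', one_div, Int.cast_natCast]
end

section
/- For every integer k ≥ 1, Σ_{m=1}^{∞} (m−1)^{k−1} / (m^k (m+1)) = 2^{k−1} + Σ_{j=2}^{k} T(k−1, k−j) ζ(j) (−1)^{j+1}, where ζ is the Riemann zeta function and T(l, j) = Σ_{i=0}^{j} C(l, i). -/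
/-- The entries of Bernoulli's triangle: partial sums of binomial coefficients,
`T(l, j) = ∑_{i=0}^{j} C(l, i)`. -/
def bernoulliTriangle (l j : ℕ) : ℕ := ∑ i ∈ Finset.range (j + 1), Nat.choose l i

/-!
Write `n = k - 1`. For `x ≠ 0, -1` the summand has the partial-fraction expansion
`(x - 1)^n / (x^(n+1) (x + 1)) = 2^n / (x (x + 1)) + ∑_{j=2}^{n+1} (-1)^(j+1) T(n, n+1-j) / x^j`.
Cleared of denominators this is the generating-function identity
`(1 - z) ∑_{i<n} T(n, i) z^i = (1 + z)^n - 2^n z^n` at `z = -x`, which holds because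
multiplying the partial sums `T(n, i)` by `1 - z` telescopes them back to the binomial
coefficients. Summing over `m ≥ 1`, the first term telescopes to `2^n` and the `j`-th one
gives `ζ(j)`.
-/

open Finset

theorem one_sub_mul_sum_partialSums_mul_pow {R : Type*} [CommRing R] (a : ℕ → R) (z : R)
    (N : ℕ) :
    (1 - z) * ∑ i ∈ range N, (∑ l ∈ range (i + 1), a l) * z ^ i
      = ∑ i ∈ range N, a i * z ^ i - (∑ l ∈ range N, a l) * z ^ N := by
  induction N with
  | zero => simp
  | succ N ih =>
    rw [sum_range_succ, mul_add, ih]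
    simp only [sum_range_succ]
    ring

theorem one_sub_mul_sum_bernoulliTriangle_mul_pow {R : Type*} [CommRing R] (n : ℕ) (z : R) :
    (1 - z) * ∑ i ∈ range n, (bernoulliTriangle n i : R) * z ^ i
      = (1 + z) ^ n - 2 ^ n * z ^ n := by
  have hbinom : ∑ i ∈ range n, (n.choose i : R) * z ^ i + z ^ n = (1 + z) ^ n := by
    rw [add_comm 1 z, add_pow, sum_range_succ]
    simp [mul_comm]
  have htwo : ∑ i ∈ range n, (n.choose i : R) + 1 = 2 ^ n := by
    have := congrArg (Nat.cast (R := R)) (Nat.sum_range_choose n)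
    push_cast [sum_range_succ] at this
    simpa using this
  simp only [bernoulliTriangle, Nat.cast_sum]
  rw [one_sub_mul_sum_partialSums_mul_pow]
  linear_combination hbinom - z ^ n * htwo

theorem sum_Icc_two_eq_sum_range_reflect {M : Type*} [AddCommMonoid M] (g : ℕ → M) (n : ℕ) :
    ∑ j ∈ Icc 2 (n + 1), g j = ∑ i ∈ range n, g (n + 1 - i) := by
  rw [← Nat.Ico_zero_eq_range, sum_Ico_reflect g 0 (by omega : n ≤ n + 1 + 1),
    ← Ico_add_one_right_eq_Icc]
  congr 2
  omega

theorem sub_one_pow_div_eq_sum_bernoulliTriangle {K : Type*} [Field K] (n : ℕ) {x : K}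
    (hx : x ≠ 0) (hx1 : x + 1 ≠ 0) :
    (x - 1) ^ n / (x ^ (n + 1) * (x + 1))
      = 2 ^ n / (x * (x + 1))
        + ∑ j ∈ Icc 2 (n + 1),
            (bernoulliTriangle n (n + 1 - j) : K) * (1 / x ^ j) * (-1) ^ (j + 1) := by
  have hterm : ∀ i ∈ range n,
      (bernoulliTriangle n (n + 1 - (n + 1 - i)) : K) * (1 / x ^ (n + 1 - i))
          * (-1) ^ (n + 1 - i + 1)
        = -(-x⁻¹) ^ (n + 1) * ((bernoulliTriangle n i : K) * (-x) ^ i) := by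
    intro i hi
    obtain ⟨d, hd⟩ : ∃ d, n + 1 = d + i := ⟨n + 1 - i, by simp at hi; omega⟩
    have hinv : (-x⁻¹) ^ i * (-x) ^ i = 1 := by
      rw [← mul_pow]
      field_simp
      simp
    rw [hd, Nat.add_sub_cancel, Nat.add_sub_cancel_left]
    calc _ = -(-x⁻¹) ^ d * (bernoulliTriangle n i : K) := by
            rw [neg_pow x⁻¹, inv_pow, one_div]
            ring
      _ = _ := by linear_combination (-x⁻¹) ^ d * (bernoulliTriangle n i : K) * hinv
  have hgen := one_sub_mul_sum_bernoulliTriangle_mul_pow n (-x)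
  rw [sub_neg_eq_add, add_comm 1 x, mul_comm (x + 1), ← sub_eq_add_neg, ← neg_sub x, neg_pow,
    neg_pow x] at hgen
  have hsign : ((-1 : K) ^ n) ^ 2 = 1 := by
    rw [← pow_mul, mul_comm, pow_mul]
    simp
  rw [sum_Icc_two_eq_sum_range_reflect, sum_congr rfl hterm, ← mul_sum,
    eq_div_of_mul_eq hx1 hgen, neg_pow, inv_pow, pow_succ (-1 : K)]
  field_simp
  linear_combination (x ^ (n + 1) * 2 ^ n - x * (x - 1) ^ n) * hsign

theorem hasSum_one_div_pnat_pow_riemannZeta {j : ℕ} (hj : 1 < j) :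
    HasSum (fun m : ℕ+ => 1 / (m : ℂ) ^ j) (riemannZeta j) := by
  have hsum : Summable (fun n : ℕ => 1 / (n : ℂ) ^ j) := by
    simpa [← Complex.cpow_natCast] using
      Complex.summable_one_div_nat_cpow.mpr (by simpa using hj)
  rw [hasSum_pnat_iff (f := fun n : ℕ => 1 / (n : ℂ) ^ j), zeta_nat_eq_tsum_of_gt_one hj]
  simpa [zero_pow (by omega : j ≠ 0)] using hsum.hasSum

theorem hasSum_one_div_pnat_mul_add_one :
    HasSum (fun m : ℕ+ => 1 / ((m : ℂ) * (m + 1))) 1 := by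
  have hpartial (N : ℕ) :
      ∑ n ∈ range N, 1 / (((n : ℝ) + 1) * (n + 1 + 1)) = 1 - 1 / (N + 1) := by
    induction N with
    | zero => simp
    | succ N ih =>
      rw [sum_range_succ, ih]
      push_cast
      field_simp
      ring
  have hreal : HasSum (fun n : ℕ => 1 / (((n : ℝ) + 1) * (n + 1 + 1))) 1 := by
    rw [hasSum_iff_tendsto_nat_of_nonneg (fun n => by positivity), funext hpartial]
    simpa using tendsto_one_div_add_atTop_nhds_zero_nat.const_sub (1 : ℝ)
  rw [hasSum_pnat_iff_hasSum_succ (f := fun n : ℕ => 1 / ((n : ℂ) * (n + 1)))]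
  have hcomplex := Complex.hasSum_ofReal.mpr hreal
  push_cast at hcomplex
  simpa [add_assoc] using hcomplex

/-- For `k ≥ 1`,
`∑_{m=1}^∞ (m-1)^{k-1} / (m^k (m+1)) = 2^{k-1} + ∑_{j=2}^{k} T(k-1, k-j) ζ(j) (-1)^{j+1}`,
where `ζ` is the Riemann zeta function. -/
theorem sum_Qk_eq_zeta_combination (k : ℕ) (hk : 1 ≤ k) :
    ∑' m : ℕ+, (((m : ℂ) - 1) ^ (k - 1) / ((m : ℂ) ^ k * ((m : ℂ) + 1)))
      = 2 ^ (k - 1)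
        + ∑ j ∈ Finset.Icc 2 k,
            (bernoulliTriangle (k - 1) (k - j) : ℂ) * riemannZeta j * (-1) ^ (j + 1) := by
  obtain ⟨n, rfl⟩ : ∃ n, k = n + 1 := ⟨k - 1, by omega⟩
  rw [Nat.add_sub_cancel]
  have hzeta : ∀ j ∈ Icc 2 (n + 1), HasSum
      (fun m : ℕ+ => (bernoulliTriangle n (n + 1 - j) : ℂ) * (1 / (m : ℂ) ^ j) * (-1) ^ (j + 1))
      ((bernoulliTriangle n (n + 1 - j) : ℂ) * riemannZeta j * (-1) ^ (j + 1)) := fun j hj =>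
    ((hasSum_one_div_pnat_pow_riemannZeta (by simp at hj; omega)).mul_left _).mul_right _
  have hsum := (hasSum_one_div_pnat_mul_add_one.mul_left (2 ^ n)).add (hasSum_sum hzeta)
  rw [mul_one] at hsum
  refine (hsum.congr_fun fun m => ?_).tsum_eq
  rw [sub_one_pow_div_eq_sum_bernoulliTriangle n (by simp) (by norm_cast; simp), mul_one_div]
end

section
/- lim_{k → ∞} k (2^{k−1} + Σ_{j=2}^{k} T(k−1, k−j) ζ(j) (−1)^{j+1}) = 1, where ζ is the Riemann zeta function and T(l, j) = Σ_{i=0}^{j} C(l, i). -/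
/-!
Writing `ζ(j) = ∑ₙ (n + 1)⁻ʲ` and summing over `j` first, a generating-function identity for
Bernoulli's triangle turns the bracket into `∑ₙ uₙ^(k-1) (uₙ₊₁ - uₙ)` with
`uₙ = n / (n + 1)` (`natDivSucc n`), a Riemann sum for `∫₀¹ x^(k-1) dx = 1 / k` over nodes
accumulating at `1`. By the tangent-line bounds `k aᵏ⁻¹ (b - a) ≤ bᵏ - aᵏ ≤ k bᵏ⁻¹ (b - a)`,
`k` times it lies below the telescoping sum `∑ₙ (uₙ₊₁ᵏ - uₙᵏ) = 1`, and, since consecutive gaps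
have ratio `(n + 1) / (n + 3)`, above `1 - ∑ₙ 2 / (n + 3) · (uₙ₊₁ᵏ - uₙᵏ)`, whose sum tends to `0`
by dominated convergence.
-/

open Finset Filter Topology

section GeneratingFunction

variable {R : Type*} [CommRing R]

lemma bernoulliTriangle_succ (l j : ℕ) :
    bernoulliTriangle l (j + 1) = bernoulliTriangle l j + l.choose (j + 1) :=
  sum_range_succ _ _

lemma bernoulliTriangle_self (l : ℕ) : bernoulliTriangle l l = 2 ^ l :=
  Nat.sum_range_choose l

theorem sub_one_mul_sum_antidiagonal_bernoulliTriangle (y : R) (l N : ℕ) :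
    (y - 1) * ∑ p ∈ antidiagonal N, (bernoulliTriangle l p.1 : R) * y ^ p.2
      + bernoulliTriangle l N = y * ∑ p ∈ antidiagonal N, (l.choose p.1 : R) * y ^ p.2 := by
  induction N with
  | zero => simp [bernoulliTriangle]
  | succ N ih =>
    simp only [Nat.sum_antidiagonal_succ', bernoulliTriangle_succ, pow_succ, ← mul_assoc,
      ← sum_mul, Nat.cast_add]
    linear_combination y * ih

theorem sub_one_mul_sum_antidiagonal_bernoulliTriangle_succ (y : R) (N : ℕ) :
    (y - 1) * ∑ p ∈ antidiagonal N, (bernoulliTriangle (N + 1) p.1 : R) * y ^ p.2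
      = (1 + y) ^ (N + 1) - 2 ^ (N + 1) := by
  have hbinom :
      (1 + y) ^ (N + 1) = 1 + y * ∑ p ∈ antidiagonal N, ((N + 1).choose p.1 : R) * y ^ p.2 := by
    rw [(Commute.one_left y).add_pow', Nat.sum_antidiagonal_succ', mul_sum]
    exact congrArg₂ _ (by simp) (sum_congr rfl fun p _ => by simp; ring)
  have hT : (bernoulliTriangle (N + 1) N : R) + 1 = 2 ^ (N + 1) := by
    have := congrArg (Nat.cast (R := R)) (bernoulliTriangle_succ (N + 1) N)
    rw [bernoulliTriangle_self, Nat.choose_self] at this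
    push_cast at this
    exact this.symm
  linear_combination sub_one_mul_sum_antidiagonal_bernoulliTriangle y (N + 1) N - hT - hbinom

theorem one_add_mul_sum_bernoulliTriangle_mul_pow (x : R) (k : ℕ) :
    (1 + x) * ∑ j ∈ Icc 2 k, (bernoulliTriangle (k - 1) (k - j) : R) * x ^ j * (-1) ^ (j + 1)
      = x ^ 2 * ((1 - x) ^ (k - 1) - 2 ^ (k - 1)) := by
  rcases lt_or_ge k 2 with hk | hk
  · rw [Icc_eq_empty (by omega), Nat.sub_eq_zero_of_le (by omega : k ≤ 1)]; simp
  obtain ⟨N, rfl⟩ := Nat.exists_eq_add_of_le' hk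
  have hreindex : ∑ j ∈ Icc 2 (N + 2),
        (bernoulliTriangle (N + 1) (N + 2 - j) : R) * x ^ j * (-1) ^ (j + 1)
      = -x ^ 2 * ∑ p ∈ antidiagonal N, (bernoulliTriangle (N + 1) p.1 : R) * (-x) ^ p.2 := by
    rw [mul_sum]
    symm
    refine sum_nbij' (fun p => p.2 + 2) (fun j => (N + 2 - j, j - 2)) ?_ ?_ ?_ ?_ ?_ <;>
      simp only [mem_Icc, HasAntidiagonal.mem_antidiagonal, Prod.forall, Prod.mk.injEq]
    any_goals intros; omega
    intro i t hit
    rw [show N + 2 - (t + 2) = i by omega]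
    ring
  rw [show N + 2 - 1 = N + 1 by omega, hreindex]
  linear_combination x ^ 2 * sub_one_mul_sum_antidiagonal_bernoulliTriangle_succ (-x) N

end GeneratingFunction

section PowerBounds

variable {R : Type*} [CommRing R] [LinearOrder R] [IsStrictOrderedRing R] {a b : R}

theorem mul_pow_sub_one_mul_sub_le_pow_sub_pow (ha : 0 ≤ a) (hab : a ≤ b) (k : ℕ) :
    k * a ^ (k - 1) * (b - a) ≤ b ^ k - a ^ k := by
  rw [← geom_sum₂_mul]
  gcongr ?_ * _
  calc (k : R) * a ^ (k - 1) = ∑ i ∈ range k, a ^ i * a ^ (k - 1 - i) := by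
        rw [sum_congr rfl fun i hi => by rw [← pow_add, Nat.add_sub_cancel' (by simp at hi; omega)]]
        simp
    _ ≤ ∑ i ∈ range k, b ^ i * a ^ (k - 1 - i) := by gcongr

theorem pow_sub_pow_le_mul_pow_sub_one_mul_sub (ha : 0 ≤ a) (hab : a ≤ b) (k : ℕ) :
    b ^ k - a ^ k ≤ k * b ^ (k - 1) * (b - a) :=
  calc b ^ k - a ^ k ≤ |b ^ k - a ^ k| := le_abs_self _
    _ ≤ |b - a| * k * max |b| |a| ^ (k - 1) := abs_pow_sub_pow_le b a k
    _ = k * b ^ (k - 1) * (b - a) := by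
      rw [abs_of_nonneg (sub_nonneg.2 hab), abs_of_nonneg (ha.trans hab), abs_of_nonneg ha,
        max_eq_left hab]
      ring

theorem pow_sub_pow_mul_one_sub_le (ha : 0 ≤ a) (hab : a ≤ b) (hb : b ≤ 1) (k : ℕ) :
    (b ^ k - a ^ k) * (1 - b) ≤ b - a := by
  have hb0 : 0 ≤ b := ha.trans hab
  have htangent : k * b ^ (k - 1) * (1 - b) ≤ 1 := by
    have := mul_pow_sub_one_mul_sub_le_pow_sub_pow hb0 hb k
    rw [one_pow] at this
    linarith [pow_nonneg hb0 k]
  calc (b ^ k - a ^ k) * (1 - b) ≤ k * b ^ (k - 1) * (b - a) * (1 - b) := by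
        gcongr ?_ * _
        exact pow_sub_pow_le_mul_pow_sub_one_mul_sub ha hab k
    _ = (k * b ^ (k - 1) * (1 - b)) * (b - a) := by ring
    _ ≤ b - a := mul_le_of_le_one_left (sub_nonneg.2 hab) htangent

end PowerBounds

noncomputable def natDivSucc (n : ℕ) : ℝ := n / (n + 1)

lemma natDivSucc_zero : natDivSucc 0 = 0 := by simp [natDivSucc]

lemma natDivSucc_nonneg (n : ℕ) : 0 ≤ natDivSucc n := by unfold natDivSucc; positivity

lemma one_sub_natDivSucc (n : ℕ) : 1 - natDivSucc n = 1 / (n + 1) := by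
  unfold natDivSucc; field_simp; ring

lemma natDivSucc_lt_one (n : ℕ) : natDivSucc n < 1 := by
  have : (0 : ℝ) < 1 / (n + 1) := by positivity
  linarith [one_sub_natDivSucc n]

lemma natDivSucc_succ_sub (n : ℕ) :
    natDivSucc (n + 1) - natDivSucc n = 1 / ((n + 1) * (n + 2)) := by
  unfold natDivSucc; push_cast; field_simp; ring

lemma natDivSucc_succ_succ_sub (n : ℕ) :
    natDivSucc (n + 2) - natDivSucc (n + 1)
      = (1 - 2 / (n + 3)) * (natDivSucc (n + 1) - natDivSucc n) := by
  rw [natDivSucc_succ_sub, natDivSucc_succ_sub]; push_cast; field_simp; ring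

lemma natDivSucc_le_succ (n : ℕ) : natDivSucc n ≤ natDivSucc (n + 1) := by
  have : (0 : ℝ) < 1 / ((n + 1) * (n + 2)) := by positivity
  linarith [natDivSucc_succ_sub n]

lemma tendsto_natDivSucc : Tendsto natDivSucc atTop (𝓝 1) :=
  tendsto_natCast_div_add_atTop 1

theorem hasSum_pow_natDivSucc_succ_sub {k : ℕ} (hk : k ≠ 0) :
    HasSum (fun n => natDivSucc (n + 1) ^ k - natDivSucc n ^ k) 1 := by
  rw [hasSum_iff_tendsto_nat_of_nonneg
    fun n => sub_nonneg.2 (pow_le_pow_left₀ (natDivSucc_nonneg n) (natDivSucc_le_succ n) k)]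
  simp only [sum_range_sub (fun n => natDivSucc n ^ k), natDivSucc_zero, zero_pow hk, sub_zero]
  simpa using tendsto_natDivSucc.pow k

theorem hasSum_natDivSucc_succ_sub : HasSum (fun n => natDivSucc (n + 1) - natDivSucc n) 1 := by
  simpa using hasSum_pow_natDivSucc_succ_sub one_ne_zero

theorem summable_pow_natDivSucc_mul_succ_sub (k : ℕ) :
    Summable fun n => natDivSucc n ^ (k - 1) * (natDivSucc (n + 1) - natDivSucc n) :=
  hasSum_natDivSucc_succ_sub.summable.of_nonneg_of_le
    (fun n => mul_nonneg (pow_nonneg (natDivSucc_nonneg n) _) (sub_nonneg.2 (natDivSucc_le_succ n)))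
    fun n => mul_le_of_le_one_left (sub_nonneg.2 (natDivSucc_le_succ n))
      (pow_le_one₀ (natDivSucc_nonneg n) (natDivSucc_lt_one n).le)

theorem mul_tsum_pow_natDivSucc_mul_succ_sub_le_one {k : ℕ} (hk : k ≠ 0) :
    k * ∑' n, natDivSucc n ^ (k - 1) * (natDivSucc (n + 1) - natDivSucc n) ≤ 1 := by
  rw [← tsum_mul_left, ← (hasSum_pow_natDivSucc_succ_sub hk).tsum_eq]
  refine Summable.tsum_le_tsum (fun n => ?_) ((summable_pow_natDivSucc_mul_succ_sub k).mul_left _)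
    (hasSum_pow_natDivSucc_succ_sub hk).summable
  rw [← mul_assoc]
  exact mul_pow_sub_one_mul_sub_le_pow_sub_pow (natDivSucc_nonneg n) (natDivSucc_le_succ n) k

lemma div_mul_pow_natDivSucc_succ_sub_mem_Icc (k n : ℕ) :
    2 / ((n : ℝ) + 3) * (natDivSucc (n + 1) ^ k - natDivSucc n ^ k)
      ∈ Set.Icc 0 (2 * (natDivSucc (n + 1) - natDivSucc n)) := by
  have hD := pow_sub_pow_mul_one_sub_le (natDivSucc_nonneg n) (natDivSucc_le_succ n)
    (natDivSucc_lt_one _).le k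
  rw [one_sub_natDivSucc, mul_one_div, div_le_iff₀ (by positivity)] at hD
  have hD0 := sub_nonneg.2 (pow_le_pow_left₀ (natDivSucc_nonneg n) (natDivSucc_le_succ n) k)
  have hΔ0 := sub_nonneg.2 (natDivSucc_le_succ n)
  refine ⟨by positivity, ?_⟩
  rw [div_mul_eq_mul_div, div_le_iff₀ (by positivity)]
  push_cast at hD
  nlinarith

theorem tendsto_tsum_div_mul_pow_natDivSucc_succ_sub :
    Tendsto
      (fun k : ℕ => ∑' n : ℕ, 2 / ((n : ℝ) + 3) * (natDivSucc (n + 1) ^ k - natDivSucc n ^ k))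
      atTop (𝓝 0) := by
  have hlim (n : ℕ) : Tendsto
      (fun k : ℕ => 2 / ((n : ℝ) + 3) * (natDivSucc (n + 1) ^ k - natDivSucc n ^ k))
      atTop (𝓝 0) := by
    have hpow (m : ℕ) :=
      tendsto_pow_atTop_nhds_zero_of_lt_one (natDivSucc_nonneg m) (natDivSucc_lt_one m)
    simpa using ((hpow (n + 1)).sub (hpow n)).const_mul (2 / ((n : ℝ) + 3))
  simpa using tendsto_tsum_of_dominated_convergence
    (hasSum_natDivSucc_succ_sub.summable.mul_left 2) hlim (.of_forall fun k n => by
      obtain ⟨h0, h1⟩ := div_mul_pow_natDivSucc_succ_sub_mem_Icc k n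
      rwa [Real.norm_of_nonneg h0])

theorem one_sub_tsum_le_mul_tsum_pow_natDivSucc_mul_succ_sub {k : ℕ} (hk : 2 ≤ k) :
    1 - ∑' n : ℕ, 2 / ((n : ℝ) + 3) * (natDivSucc (n + 1) ^ k - natDivSucc n ^ k)
      ≤ k * ∑' n, natDivSucc n ^ (k - 1) * (natDivSucc (n + 1) - natDivSucc n) := by
  have hD := hasSum_pow_natDivSucc_succ_sub (k := k) (by omega)
  have hε :
      Summable fun n : ℕ => 2 / ((n : ℝ) + 3) * (natDivSucc (n + 1) ^ k - natDivSucc n ^ k) :=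
    (hasSum_natDivSucc_succ_sub.summable.mul_left 2).of_nonneg_of_le
      (fun n => (div_mul_pow_natDivSucc_succ_sub_mem_Icc k n).1)
      (fun n => (div_mul_pow_natDivSucc_succ_sub_mem_Icc k n).2)
  have hF := (summable_pow_natDivSucc_mul_succ_sub k).mul_left (k : ℝ)
  rw [← tsum_mul_left, hF.tsum_eq_zero_add, natDivSucc_zero, zero_pow (by omega), zero_mul,
    mul_zero, zero_add, ← hD.tsum_eq, ← hD.summable.tsum_sub hε]
  refine Summable.tsum_le_tsum (fun n => ?_) (hD.summable.sub hε) ((summable_nat_add_iff 1).2 hF)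
  have hw : (0 : ℝ) ≤ 1 - 2 / (n + 3) := by
    rw [sub_nonneg, div_le_one (by positivity)]; linarith [(n.cast_nonneg : (0 : ℝ) ≤ n)]
  rw [natDivSucc_succ_succ_sub]
  calc _ = (1 - 2 / ((n : ℝ) + 3)) * (natDivSucc (n + 1) ^ k - natDivSucc n ^ k) := by ring
    _ ≤ (1 - 2 / ((n : ℝ) + 3))
          * (k * natDivSucc (n + 1) ^ (k - 1) * (natDivSucc (n + 1) - natDivSucc n)) := by
        gcongr
        exact pow_sub_pow_le_mul_pow_sub_one_mul_sub (natDivSucc_nonneg n) (natDivSucc_le_succ n) k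
    _ = _ := by ring

theorem tendsto_mul_tsum_pow_natDivSucc_mul_succ_sub :
    Tendsto (fun k : ℕ => k * ∑' n, natDivSucc n ^ (k - 1) * (natDivSucc (n + 1) - natDivSucc n))
      atTop (𝓝 1) :=
  tendsto_of_tendsto_of_tendsto_of_le_of_le'
    (by simpa using tendsto_tsum_div_mul_pow_natDivSucc_succ_sub.const_sub 1) tendsto_const_nhds
    ((eventually_ge_atTop 2).mono fun _ hk =>
      one_sub_tsum_le_mul_tsum_pow_natDivSucc_mul_succ_sub hk)
    ((eventually_ge_atTop 1).mono fun _ hk =>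
      mul_tsum_pow_natDivSucc_mul_succ_sub_le_one (by omega))

theorem hasSum_one_div_nat_add_one_pow_riemannZeta {j : ℕ} (hj : 1 < j) :
    HasSum (fun n : ℕ => 1 / ((n : ℂ) + 1) ^ j) (riemannZeta j) := by
  have hs : Summable fun n : ℕ => 1 / (n : ℂ) ^ j := by
    simpa using (Complex.summable_one_div_nat_cpow (p := j)).mpr (by simpa using hj)
  rw [zeta_nat_eq_tsum_of_gt_one hj]
  simpa [zero_pow (by omega : j ≠ 0)] using (hasSum_nat_add_iff' 1).mpr hs.hasSum

theorem sum_bernoulliTriangle_mul_one_div_pow (k n : ℕ) :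
    ∑ j ∈ Icc 2 k,
        (bernoulliTriangle (k - 1) (k - j) : ℂ) * (1 / ((n : ℂ) + 1) ^ j) * (-1) ^ (j + 1)
      = ((natDivSucc n ^ (k - 1) - 2 ^ (k - 1)) * (natDivSucc (n + 1) - natDivSucc n) : ℝ) := by
  have h := one_add_mul_sum_bernoulliTriangle_mul_pow (1 / ((n : ℂ) + 1)) k
  have hn : (n : ℂ) + 1 ≠ 0 := by exact_mod_cast n.succ_ne_zero
  have h1x : 1 + 1 / ((n : ℂ) + 1) ≠ 0 := by
    rw [one_add_div hn]; exact div_ne_zero (by exact_mod_cast (n + 1).succ_ne_zero) hn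
  have hu : ((natDivSucc n : ℝ) : ℂ) = 1 - 1 / ((n : ℂ) + 1) := by
    have := congrArg Complex.ofReal (one_sub_natDivSucc n)
    push_cast at this
    linear_combination -this
  have hx : 1 / ((n : ℂ) + 1) ^ 2 = (1 + 1 / ((n : ℂ) + 1)) * (1 / ((n + 1) * (n + 2))) := by
    have hn2 : (n : ℂ) + 2 ≠ 0 := by exact_mod_cast (n + 1).succ_ne_zero
    field_simp; ring
  simp only [one_div_pow] at h
  rw [← mul_right_inj' h1x, h, natDivSucc_succ_sub]
  push_cast
  rw [hu]
  linear_combination ((1 - 1 / ((n : ℂ) + 1)) ^ (k - 1) - 2 ^ (k - 1)) * hx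

theorem zeta_combination_eq_tsum (k : ℕ) :
    2 ^ (k - 1)
        + ∑ j ∈ Icc 2 k, (bernoulliTriangle (k - 1) (k - j) : ℂ) * riemannZeta j * (-1) ^ (j + 1)
      = (∑' n, natDivSucc n ^ (k - 1) * (natDivSucc (n + 1) - natDivSucc n) : ℝ) := by
  have hζ : HasSum (fun n : ℕ => ∑ j ∈ Icc 2 k,
        (bernoulliTriangle (k - 1) (k - j) : ℂ) * (1 / ((n : ℂ) + 1) ^ j) * (-1) ^ (j + 1))
      (∑ j ∈ Icc 2 k, (bernoulliTriangle (k - 1) (k - j) : ℂ) * riemannZeta j * (-1) ^ (j + 1)) :=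
    hasSum_sum fun j hj => ((hasSum_one_div_nat_add_one_pow_riemannZeta
      (by simp only [mem_Icc] at hj; omega)).mul_left _).mul_right _
  simp only [sum_bernoulliTriangle_mul_one_div_pow, sub_mul] at hζ
  have hu := Complex.hasSum_ofReal.mpr ((summable_pow_natDivSucc_mul_succ_sub k).hasSum.sub
    (hasSum_natDivSucc_succ_sub.mul_left (2 ^ (k - 1))))
  rw [hζ.unique hu]
  push_cast
  ring

/-- `lim_{k → ∞} k (2^{k-1} + ∑_{j=2}^{k} T(k-1, k-j) ζ(j) (-1)^{j+1}) = 1`,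
where `ζ` is the Riemann zeta function. -/
theorem tendsto_k_zeta_combination :
    Filter.Tendsto
      (fun k : ℕ => (k : ℂ) * (2 ^ (k - 1)
          + ∑ j ∈ Finset.Icc 2 k,
              (bernoulliTriangle (k - 1) (k - j) : ℂ) * riemannZeta j * (-1) ^ (j + 1)))
      Filter.atTop (nhds 1) := by
  simp only [zeta_combination_eq_tsum]
  simpa using tendsto_mul_tsum_pow_natDivSucc_mul_succ_sub.ofReal
end

section
/- Let X_1, X_2, … be an IID sequence of random variables with the Luroth distribution and S_k = X_1 + … + X_k. Then S_k/(k log k) converges to 1 in probability: for every ε > 0, lim_{k → ∞} P(|S_k/(k log k) − 1| > ε) = 0. -/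
/-!
A Luroth variable has `P(X > j) = 1/(j+1)`, so its mean is infinite and we truncate at
`m = ⌊k log k⌋`. Some `X_i` with `i < k` exceeds `m` with probability at most
`k/(m+1) ≤ 1/log k`. A truncated summand has mean `H_m ∈ [log k, 1 + log k + log log k]` and
second moment at most `2m`, so by Chebyshev the truncated sum leaves `ε/2 · k log k` around its
mean `k H_m` with probability at most `2km / (ε/2 · k log k)² ≤ 8/(ε² log k)`.
-/

open MeasureTheory ProbabilityTheory Filter Finset

lemma hasSum_one_div_mul_succ_tail (j : ℕ) :
    HasSum (fun n : ℕ => 1 / (((n + j + 1 : ℕ) : ℝ) * ((n + j + 1 : ℕ) + 1))) (1 / (j + 1)) := by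
  have hterm : ∀ n : ℕ, 1 / (((n + j + 1 : ℕ) : ℝ) * ((n + j + 1 : ℕ) + 1))
      = 1 / ((n + j + 1 : ℕ) : ℝ) - 1 / ((n + 1 + j + 1 : ℕ) : ℝ) := by
    intro n; push_cast; field_simp; ring
  rw [hasSum_iff_tendsto_nat_of_nonneg (fun n => by positivity)]
  simp_rw [hterm, Finset.sum_range_sub' (fun n => 1 / ((n + j + 1 : ℕ) : ℝ))]
  have hlim : Tendsto (fun n : ℕ => 1 / ((n + j + 1 : ℕ) : ℝ)) atTop (nhds 0) :=
    tendsto_one_div_atTop_nhds_zero_nat.comp (tendsto_add_atTop_nat (j + 1))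
  simpa [add_assoc] using (tendsto_const_nhds (x := (1 : ℝ) / (j + 1))).sub hlim

lemma harmonic_floor_mul_log_mem_Icc {x : ℝ} (hx : Real.exp 1 ≤ x) :
    (harmonic ⌊x * Real.log x⌋₊ : ℝ)
      ∈ Set.Icc (Real.log x) (1 + Real.log x + Real.log (Real.log x)) := by
  have hx0 : 0 < x := (Real.exp_pos 1).trans_le hx
  have hlog : 1 ≤ Real.log x := by simpa using Real.log_le_log (Real.exp_pos 1) hx
  have hxb : x ≤ x * Real.log x := le_mul_of_one_le_right hx0.le hlog
  constructor
  · refine (Real.log_le_log hx0 ?_).trans (log_add_one_le_harmonic _)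
    push_cast
    linarith [Nat.lt_floor_add_one (x * Real.log x)]
  · refine (harmonic_le_one_add_log _).trans ?_
    rw [add_assoc, ← Real.log_mul hx0.ne' (by positivity)]
    gcongr
    · exact Nat.cast_pos.mpr (Nat.floor_pos.mpr (by linarith [Real.add_one_le_exp (1 : ℝ)]))
    · exact Nat.floor_le (by positivity)

lemma eventually_one_add_log_log_le {δ : ℝ} (hδ : 0 < δ) :
    ∀ᶠ x : ℝ in atTop, 1 + Real.log (Real.log x) ≤ δ * Real.log x := by
  have hloglog := (Real.isLittleO_log_id_atTop.comp_tendsto Real.tendsto_log_atTop).bound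
    (half_pos hδ)
  filter_upwards [hloglog, Real.tendsto_log_atTop.eventually_ge_atTop (2 / δ),
    Real.tendsto_log_atTop.eventually_ge_atTop 0] with x hll hlog hlog0
  simp only [Function.comp_apply, id, Real.norm_eq_abs, abs_of_nonneg hlog0] at hll
  have : 1 ≤ δ / 2 * Real.log x := by
    rw [div_le_iff₀ hδ] at hlog; linarith
  linarith [le_abs_self (Real.log (Real.log x))]

lemma comp_min_eq_add_sum (f : ℕ → ℝ) (n m : ℕ) :
    f (min n m) = f 0 + ∑ j ∈ range m, if j < n then f (j + 1) - f j else 0 := by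
  rw [← sum_filter, show (range m).filter (· < n) = range (min n m) by ext; simp; omega,
    sum_range_sub]
  ring

section

variable {Ω : Type*} [MeasurableSpace Ω] {μ : Measure Ω}

lemma integral_comp_min_eq [IsProbabilityMeasure μ] {X : Ω → ℕ}
    (hX : Measurable X) (f : ℕ → ℝ) (m : ℕ) :
    ∫ ω, f (min (X ω) m) ∂μ
      = f 0 + ∑ j ∈ range m, (f (j + 1) - f j) * μ.real {ω | j < X ω} := by
  have hset : ∀ j : ℕ, MeasurableSet {ω | j < X ω} := fun j => hX measurableSet_Ioi
  have hind : ∀ j : ℕ, (fun ω => if j < X ω then f (j + 1) - f j else 0)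
      = {ω | j < X ω}.indicator fun _ => f (j + 1) - f j := by
    intro j; ext ω; simp [Set.indicator_apply]
  simp_rw [comp_min_eq_add_sum f _ m]
  rw [integral_add (integrable_const _), integral_const, integral_finsetSum]
  · simp_rw [hind, integral_indicator_const _ (hset _), smul_eq_mul, mul_comm]
    simp
  · exact fun j _ => by rw [hind]; exact (integrable_const _).indicator (hset j)
  · exact integrable_finsetSum _ fun j _ => by
      rw [hind]; exact (integrable_const _).indicator (hset j)

lemma measure_abs_sum_sub_integral_min_ge_le [IsProbabilityMeasure μ]
    {X : ℕ → Ω → ℕ} (hX : ∀ i, Measurable (X i)) (hindep : iIndepFun X μ) (k m : ℕ) {c : ℝ}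
    (hc : 0 < c) :
    μ {ω | c ≤ |((∑ i ∈ range k, X i ω : ℕ) : ℝ)
        - ∑ i ∈ range k, ∫ ω', ((min (X i ω') m : ℕ) : ℝ) ∂μ|}
      ≤ ∑ i ∈ range k, μ {ω | m < X i ω}
        + ENNReal.ofReal ((∑ i ∈ range k, ∫ ω, ((min (X i ω) m : ℕ) : ℝ) ^ 2 ∂μ) / c ^ 2) := by
  set Y : ℕ → Ω → ℝ := fun i ω => ((min (X i ω) m : ℕ) : ℝ)
  have hYmeas : ∀ i, Measurable (Y i) := fun i =>
    (measurable_from_top (f := fun n : ℕ => ((min n m : ℕ) : ℝ))).comp (hX i)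
  have hYLp : ∀ i, MemLp (Y i) 2 μ := fun i =>
    MemLp.of_bound (hYmeas i).aestronglyMeasurable m
      (ae_of_all _ fun ω => by
        rw [Real.norm_natCast]; exact_mod_cast min_le_right _ _)
  have hvar : variance (∑ i ∈ range k, Y i) μ ≤ ∑ i ∈ range k, ∫ ω, Y i ω ^ 2 ∂μ := by
    rw [IndepFun.variance_sum (fun i _ => hYLp i) fun i _ j _ hij =>
      (hindep.comp (fun _ n => ((min n m : ℕ) : ℝ)) fun _ => measurable_from_top).indepFun hij]
    exact sum_le_sum fun i _ => variance_le_expectation_sq (hYmeas i).aestronglyMeasurable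
  have hmean : ∫ ω, (∑ i ∈ range k, Y i) ω ∂μ = ∑ i ∈ range k, ∫ ω, Y i ω ∂μ := by
    simp_rw [Finset.sum_apply]
    exact integral_finsetSum _ fun i _ => (hYLp i).integrable one_le_two
  have hsub : {ω | c ≤ |((∑ i ∈ range k, X i ω : ℕ) : ℝ) - ∑ i ∈ range k, ∫ ω', Y i ω' ∂μ|}
      ⊆ (⋃ i ∈ range k, {ω | m < X i ω})
        ∪ {ω | c ≤ |(∑ i ∈ range k, Y i) ω - ∫ ω', (∑ i ∈ range k, Y i) ω' ∂μ|} := by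
    intro ω hω
    by_cases h : ∃ i ∈ range k, m < X i ω
    · left; simpa using h
    · right
      push Not at h
      have hS : ((∑ i ∈ range k, X i ω : ℕ) : ℝ) = (∑ i ∈ range k, Y i) ω := by
        rw [Nat.cast_sum, Finset.sum_apply]
        exact sum_congr rfl fun i hi => congrArg Nat.cast (min_eq_left (h i hi)).symm
      show c ≤ _
      rwa [hmean, ← hS]
  calc _ ≤ _ := measure_mono hsub
    _ ≤ _ := measure_union_le _ _
    _ ≤ _ := add_le_add (measure_biUnion_finset_le _ _)
      ((meas_ge_le_variance_div_sq (memLp_finsetSum' _ fun i _ => hYLp i) hc).trans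
        (ENNReal.ofReal_le_ofReal (div_le_div_of_nonneg_right hvar (sq_nonneg c))))

def HasLurothLaw (μ : Measure Ω) (X : Ω → ℕ) : Prop :=
  ∀ n : ℕ, 1 ≤ n → μ {ω | X ω = n} = ENNReal.ofReal (1 / (n * (n + 1)))

lemma HasLurothLaw.measure_lt {X : Ω → ℕ} (hL : HasLurothLaw μ X)
    (hX : Measurable X) (j : ℕ) : μ {ω | j < X ω} = ENNReal.ofReal (1 / (j + 1)) := by
  have hunion : {ω | j < X ω} = ⋃ n : ℕ, {ω | X ω = n + j + 1} := by
    ext ω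
    simp only [Set.mem_ofPred_eq, Set.mem_iUnion]
    exact ⟨fun h => ⟨X ω - j - 1, by omega⟩, fun ⟨n, hn⟩ => by omega⟩
  have hdisj : Pairwise (Function.onFun Disjoint fun n : ℕ => {ω | X ω = n + j + 1}) :=
    fun a b hab => Set.disjoint_left.mpr fun ω ha hb => hab (by simp_all)
  rw [hunion, measure_iUnion hdisj fun n => hX (measurableSet_singleton _)]
  simp_rw [fun n => hL (n + j + 1) (by omega)]
  rw [← ENNReal.ofReal_tsum_of_nonneg (fun n => by positivity)
    (hasSum_one_div_mul_succ_tail j).summable, (hasSum_one_div_mul_succ_tail j).tsum_eq]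

lemma HasLurothLaw.measureReal_lt {X : Ω → ℕ} (hL : HasLurothLaw μ X)
    (hX : Measurable X) (j : ℕ) : μ.real {ω | j < X ω} = 1 / (j + 1) := by
  rw [measureReal_def, hL.measure_lt hX, ENNReal.toReal_ofReal (by positivity)]

lemma HasLurothLaw.integral_min [IsProbabilityMeasure μ] {X : Ω → ℕ}
    (hL : HasLurothLaw μ X) (hX : Measurable X) (m : ℕ) :
    ∫ ω, ((min (X ω) m : ℕ) : ℝ) ∂μ = harmonic m := by
  rw [integral_comp_min_eq (f := fun n : ℕ => (n : ℝ)) hX, harmonic]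
  simp [hL.measureReal_lt hX]

lemma HasLurothLaw.integral_min_sq_le [IsProbabilityMeasure μ] {X : Ω → ℕ}
    (hL : HasLurothLaw μ X) (hX : Measurable X) (m : ℕ) :
    ∫ ω, ((min (X ω) m : ℕ) : ℝ) ^ 2 ∂μ ≤ 2 * m := by
  rw [integral_comp_min_eq (f := fun n : ℕ => (n : ℝ) ^ 2) hX]
  calc _ ≤ ∑ _j ∈ range m, (2 : ℝ) := by
        simp only [hL.measureReal_lt hX, Nat.cast_zero, zero_pow two_ne_zero, zero_add]
        refine sum_le_sum fun j _ => ?_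
        rw [mul_one_div, div_le_iff₀ (by positivity)]
        push_cast; nlinarith
    _ = 2 * m := by simp [mul_comm]

lemma measure_abs_sum_div_mul_log_sub_one_gt_le [IsProbabilityMeasure μ]
    {X : ℕ → Ω → ℕ} (hX : ∀ i, Measurable (X i)) (hindep : iIndepFun X μ)
    (hL : ∀ i, HasLurothLaw μ (X i)) {ε : ℝ} (hε : 0 < ε) {k : ℕ} (hk : Real.exp 1 ≤ k)
    (hkε : 1 + Real.log (Real.log k) ≤ ε / 2 * Real.log k) :
    μ {ω | ε < |((∑ i ∈ range k, X i ω : ℕ) : ℝ) / (k * Real.log k) - 1|}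
      ≤ ENNReal.ofReal ((1 + 8 / ε ^ 2) / Real.log k) := by
  have hk0 : (0 : ℝ) < k := (Real.exp_pos 1).trans_le hk
  have hlog : 1 ≤ Real.log k := by simpa using Real.log_le_log (Real.exp_pos 1) hk
  obtain ⟨hHlow, hHhigh⟩ := harmonic_floor_mul_log_mem_Icc hk
  set b := (k : ℝ) * Real.log k
  have hb : 0 < b := by positivity
  set m := ⌊b⌋₊
  have hmb : (m : ℝ) ≤ b := Nat.floor_le hb.le
  have hbm : b < m + 1 := Nat.lt_floor_add_one b
  have hmean : ∑ i ∈ range k, ∫ ω, ((min (X i ω) m : ℕ) : ℝ) ∂μ = k * harmonic m := by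
    rw [sum_congr rfl fun i _ => (hL i).integral_min (hX i) m, sum_const, card_range,
      nsmul_eq_mul]
  have hmean_close : |k * (harmonic m : ℝ) - b| ≤ ε / 2 * b := by
    rw [abs_le]; constructor <;> nlinarith
  have hsub : {ω | ε < |((∑ i ∈ range k, X i ω : ℕ) : ℝ) / b - 1|}
      ⊆ {ω | ε / 2 * b ≤ |((∑ i ∈ range k, X i ω : ℕ) : ℝ)
          - ∑ i ∈ range k, ∫ ω', ((min (X i ω') m : ℕ) : ℝ) ∂μ|} := by
    intro ω hω
    rw [Set.mem_ofPred_eq] at hω ⊢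
    rw [div_sub_one hb.ne', abs_div, abs_of_pos hb, lt_div_iff₀ hb] at hω
    rw [hmean]
    linarith [abs_sub_le ((∑ i ∈ range k, X i ω : ℕ) : ℝ) (k * harmonic m) b]
  calc _ ≤ _ := measure_mono hsub
    _ ≤ _ := measure_abs_sum_sub_integral_min_ge_le hX hindep k m (by positivity)
    _ ≤ ENNReal.ofReal (k / b) + ENNReal.ofReal (2 * k * b / (ε / 2 * b) ^ 2) := by
      gcongr
      · simp_rw [(hL _).measure_lt (hX _), sum_const, card_range, nsmul_eq_mul,
          ← ENNReal.ofReal_natCast, ← ENNReal.ofReal_mul hk0.le]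
        gcongr
        rw [mul_one_div]
        gcongr
      · calc _ ≤ ∑ _i ∈ range k, (2 * m : ℝ) :=
              sum_le_sum fun i _ => (hL i).integral_min_sq_le (hX i) m
          _ ≤ 2 * k * b := by
            rw [sum_const, card_range, nsmul_eq_mul]; nlinarith
    _ = ENNReal.ofReal ((1 + 8 / ε ^ 2) / Real.log k) := by
      rw [← ENNReal.ofReal_add (by positivity) (by positivity)]
      congr 1
      field_simp
      ring

end

/-- For an IID sequence `X_1, X_2, …` with the Luroth distribution
`P(X = n) = 1/(n(n+1))` and `S_k = X_1 + ⋯ + X_k`, the normalized sum `S_k / (k log k)`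
tends to `1` in probability: for every `ε > 0`, `P(|S_k/(k log k) - 1| > ε) → 0`. -/
theorem sum_div_klogk_tendsto_one_in_probability
    {Ω : Type*} [MeasurableSpace Ω] (μ : Measure Ω) [IsProbabilityMeasure μ]
    (X : ℕ → Ω → ℕ) (hmeas : ∀ i, Measurable (X i))
    (hindep : iIndepFun X μ)
    (hdist : ∀ i, ∀ n : ℕ, 1 ≤ n →
      μ {ω | X i ω = n} = ENNReal.ofReal (1 / (n * (n + 1))))
    (ε : ℝ) (hε : 0 < ε) :
    Filter.Tendsto
      (fun k : ℕ =>
        (μ {ω | ε < |((∑ i ∈ Finset.range k, X i ω : ℕ) : ℝ)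
            / (k * Real.log k) - 1|}).toReal)
      Filter.atTop (nhds 0) := by
  have hlog : Tendsto (fun k : ℕ => Real.log k) atTop atTop :=
    Real.tendsto_log_atTop.comp tendsto_natCast_atTop_atTop
  have hbound : ∀ᶠ k : ℕ in atTop,
      (μ {ω | ε < |((∑ i ∈ range k, X i ω : ℕ) : ℝ) / (k * Real.log k) - 1|}).toReal
        ≤ (1 + 8 / ε ^ 2) / Real.log k := by
    filter_upwards [tendsto_natCast_atTop_atTop.eventually_ge_atTop (Real.exp 1),
      tendsto_natCast_atTop_atTop.eventually (eventually_one_add_log_log_le (half_pos hε)),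
      hlog.eventually_ge_atTop 0] with k hk hkε hlog0
    exact ENNReal.toReal_le_of_le_ofReal (by positivity)
      (measure_abs_sum_div_mul_log_sub_one_gt_le hmeas hindep hdist hε hk hkε)
  exact squeeze_zero' (.of_forall fun _ => ENNReal.toReal_nonneg) hbound
    (tendsto_const_nhds.div_atTop hlog)
end

section
/- Let X_1, X_2, … be an IID sequence of random variables with the Luroth distribution, S_k = X_1 + … + X_k, and M_k = max(X_1, …, X_k). Then (S_k − M_k)/(k log k) converges to 1 in probability: for every ε > 0, lim_{k → ∞} P(|(S_k − M_k)/(k log k) − 1| > ε) = 0. -/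
/-!
Truncate every `X_i` at `L = k log k`. The truncated variable has mean
`∑_{n ≤ L} 1/(n+1) = log k + O(log log k)` and second moment at most `L`, so by Chebyshev the
truncated sum lies within `εL/4` of `k log k` outside an event of probability `O(1/log k)`.
Since `P(X > t) ≤ 1/t`, a union bound shows that outside another event of probability
`O(1/log k)` every `X_i` is at most `min(ε/2, 1) L`; there the truncated sum is `S_k` and
`M_k ≤ εL/2`.
-/

open MeasureTheory ProbabilityTheory Finset Filter Real Asymptotics

section

variable {Ω : Type*}

lemma sum_Icc_one_div_mul_add_one (c : ℕ) :
    ∑ n ∈ Icc 1 c, 1 / ((n : ℝ) * (n + 1)) = c / (c + 1) := by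
  induction c with
  | zero => simp
  | succ c ih =>
    rw [sum_Icc_succ_top (by omega), ih]
    push_cast
    field_simp
    ring

lemma abs_sum_Icc_one_div_add_one_sub_log_le (c : ℕ) :
    |∑ n ∈ Icc 1 c, 1 / ((n : ℝ) + 1) - log c| ≤ 1 := by
  have hsum : ∑ n ∈ Icc 1 c, 1 / ((n : ℝ) + 1) = harmonic c - c / (c + 1) := by
    rw [← sum_Icc_one_div_mul_add_one, harmonic_eq_sum_Icc]
    push_cast
    rw [← sum_sub_distrib]
    refine sum_congr rfl fun n hn => ?_
    have : (n : ℝ) ≠ 0 := by have := (mem_Icc.1 hn).1; positivity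
    field_simp
    ring
  have hlog : log c ≤ log (c + 1) := by
    rcases Nat.eq_zero_or_pos c with rfl | hc
    · simp
    · exact log_le_log (by positivity) (by linarith)
  have hfrac : (c : ℝ) / (c + 1) ≤ 1 := div_le_one_of_le₀ (by linarith) (by positivity)
  have hfrac0 : 0 ≤ (c : ℝ) / (c + 1) := by positivity
  have hlower := log_add_one_le_harmonic c
  have hupper := harmonic_le_one_add_log c
  push_cast at hlower
  rw [hsum, abs_le]
  constructor <;> linarith

lemma abs_log_natFloor_sub_log_le {A : ℝ} (hA : 1 ≤ A) : |log ⌊A⌋₊ - log A| ≤ log 2 := by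
  have hc : (1 : ℝ) ≤ ⌊A⌋₊ := by exact_mod_cast (Nat.one_le_floor_iff A).2 hA
  have hle : log ⌊A⌋₊ ≤ log A := log_le_log (by positivity) (Nat.floor_le (by linarith))
  have hlt : log A ≤ log 2 + log ⌊A⌋₊ := by
    rw [← log_mul two_ne_zero (by positivity)]
    exact log_le_log (by linarith) (by linarith [Nat.lt_floor_add_one A])
  rw [abs_le]
  constructor <;> linarith [log_nonneg one_le_two]

lemma eventually_add_log_log_le_mul_log (a : ℝ) {δ : ℝ} (hδ : 0 < δ) :
    ∀ᶠ x : ℝ in atTop, a + log (log x) ≤ δ * log x := by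
  have h : (fun x => a + log x) =o[atTop] id :=
    (isLittleO_const_id_atTop a).add isLittleO_log_id_atTop
  filter_upwards [(h.comp_tendsto tendsto_log_atTop).bound hδ,
    tendsto_log_atTop.eventually_ge_atTop 0] with x hx hlog
  simp only [Function.comp_apply, id, norm_eq_abs, abs_of_nonneg hlog] at hx
  exact (le_abs_self _).trans hx

lemma trimmed_sum_deviation_subset (X : ℕ → Ω → ℕ) (k : ℕ) {ε L t m : ℝ} (hL : 0 < L)
    (ht : 0 ≤ t) (htL : t ≤ L) (htε : t ≤ ε / 2 * L) (hm : |m - L| ≤ ε / 4 * L) :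
    {ω | ε < |(((∑ i ∈ range k, X i ω : ℕ) : ℝ)
        - (((range k).sup fun j => X j ω : ℕ) : ℝ)) / L - 1|}
      ⊆ (⋃ i ∈ range k, {ω | t < X i ω})
        ∪ {ω | ε / 4 * L ≤ |(∑ i ∈ range k, truncation (fun ω => (X i ω : ℝ)) L) ω - m|} := by
  intro ω hω
  by_contra hout
  simp only [Set.mem_union, Set.mem_iUnion, Set.mem_ofPred_eq, mem_range, exists_prop, not_or,
    not_exists, not_and, not_le, not_lt] at hout hω
  obtain ⟨hsmall, hdev⟩ := hout
  have htrunc : (∑ i ∈ range k, truncation (fun ω => (X i ω : ℝ)) L) ω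
      = ((∑ i ∈ range k, X i ω : ℕ) : ℝ) := by
    rw [Finset.sum_apply, Nat.cast_sum]
    refine sum_congr rfl fun i hi => ?_
    have hmem : (X i ω : ℝ) ∈ Set.Ioc (-L) L :=
      ⟨by linarith [(Nat.cast_nonneg (X i ω) : (0 : ℝ) ≤ X i ω)],
        (hsmall i (mem_range.1 hi)).trans htL⟩
    exact Set.indicator_of_mem hmem id
  have hmax : (((range k).sup fun j => X j ω : ℕ) : ℝ) ≤ t := by
    refine le_trans ?_ (Nat.floor_le ht)
    exact_mod_cast Finset.sup_le fun i hi => Nat.le_floor (hsmall i (mem_range.1 hi))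
  rw [htrunc] at hdev
  have hmax0 := (Nat.cast_nonneg ((range k).sup fun j => X j ω) : (0 : ℝ) ≤ _)
  have hclose : |(((∑ i ∈ range k, X i ω : ℕ) : ℝ)
      - (((range k).sup fun j => X j ω : ℕ) : ℝ)) / L - 1| ≤ ε := by
    rw [div_sub_one hL.ne', abs_div, abs_of_pos hL, div_le_iff₀ hL, abs_le]
    rw [abs_lt] at hdev
    rw [abs_le] at hm
    constructor <;> linarith
  linarith

def HasLurothDistribution [MeasurableSpace Ω] (μ : Measure Ω) (X : Ω → ℕ) : Prop :=
  ∀ n : ℕ, 1 ≤ n → μ {ω | X ω = n} = ENNReal.ofReal (1 / (n * (n + 1)))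

variable [MeasurableSpace Ω] {μ : Measure Ω}

lemma integral_comp_eq_sum_of_support_subset [IsFiniteMeasure μ] {X : Ω → ℕ} (hX : Measurable X)
    {f : ℕ → ℝ} {s : Finset ℕ} (hf : ∀ n ∉ s, f n = 0) :
    ∫ ω, f (X ω) ∂μ = ∑ n ∈ s, μ.real {ω | X ω = n} * f n := by
  rw [← integral_map hX.aemeasurable Measurable.of_discrete.aestronglyMeasurable,
    ← setIntegral_eq_integral_of_forall_compl_eq_zero fun n hn => hf n hn,
    setIntegral_finset s IntegrableOn.finset]
  refine sum_congr rfl fun n _ => ?_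
  rw [map_measureReal_apply hX (measurableSet_singleton n), smul_eq_mul]
  rfl

namespace HasLurothDistribution

variable {X : Ω → ℕ}

lemma measureReal_eq (hX : HasLurothDistribution μ X) {n : ℕ} (hn : 1 ≤ n) :
    μ.real {ω | X ω = n} = 1 / (n * (n + 1)) := by
  rw [measureReal_def, hX n hn, ENNReal.toReal_ofReal (by positivity)]

lemma measureReal_natCast_lt_le [IsProbabilityMeasure μ] (hX : HasLurothDistribution μ X)
    (hXm : Measurable X) (n : ℕ) : μ.real {ω | n < X ω} ≤ 1 / (n + 1) := by
  have hdisj : (Icc 1 n : Set ℕ).PairwiseDisjoint fun m => {ω | X ω = m} :=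
    fun a _ b _ hab => Set.disjoint_left.2 fun ω ha hb => hab (ha.symm.trans hb)
  have hle : (n : ℝ) / (n + 1) ≤ μ.real {ω | X ω ≤ n} := calc
    (n : ℝ) / (n + 1) = ∑ m ∈ Icc 1 n, μ.real {ω | X ω = m} := by
      rw [← sum_Icc_one_div_mul_add_one]
      exact sum_congr rfl fun m hm => (hX.measureReal_eq (mem_Icc.1 hm).1).symm
    _ = μ.real (⋃ m ∈ Icc 1 n, {ω | X ω = m}) :=
      (measureReal_biUnion_finset hdisj fun m _ => hXm (measurableSet_singleton m)).symm
    _ ≤ μ.real {ω | X ω ≤ n} := measureReal_mono fun ω hω => by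
      simp only [Set.mem_iUnion, Set.mem_ofPred_eq, mem_Icc] at hω
      obtain ⟨m, ⟨-, hmn⟩, rfl⟩ := hω
      exact hmn
  have hcompl : {ω | n < X ω} = {ω | X ω ≤ n}ᶜ := by ext; simp
  rw [hcompl, measureReal_compl (measurableSet_le hXm measurable_const),
    probReal_univ]
  have : (1 : ℝ) - n / (n + 1) = 1 / (n + 1) := by field_simp; ring
  linarith

lemma measureReal_lt_le [IsProbabilityMeasure μ] (hX : HasLurothDistribution μ X)
    (hXm : Measurable X) {t : ℝ} (ht : 0 < t) : μ.real {ω | t < X ω} ≤ 1 / t := by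
  have : {ω | t < (X ω : ℝ)} = {ω | ⌊t⌋₊ < X ω} := by
    ext; simp [Nat.floor_lt ht.le]
  rw [this]
  exact (hX.measureReal_natCast_lt_le hXm _).trans
    (one_div_le_one_div_of_le ht (Nat.lt_floor_add_one t).le)

lemma moment_truncation [IsFiniteMeasure μ] (hX : HasLurothDistribution μ X)
    (hXm : Measurable X) (A : ℝ) {p : ℕ} (hp : p ≠ 0) :
    ∫ ω, truncation (fun ω => (X ω : ℝ)) A ω ^ p ∂μ
      = ∑ n ∈ Icc 1 ⌊A⌋₊, (n : ℝ) ^ p / (n * (n + 1)) := by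
  refine (integral_comp_eq_sum_of_support_subset
    (f := fun n : ℕ => Set.indicator (Set.Ioc (-A) A) id (n : ℝ) ^ p) hXm ?_).trans
    (sum_congr rfl fun n hn => ?_)
  · intro n hn
    rw [mem_Icc, not_and_or, not_le, Nat.lt_one_iff, not_le] at hn
    rcases hn with rfl | hn
    · simp [hp]
    · rw [Set.indicator_of_notMem fun h => (not_lt.2 h.2) ((Nat.floor_lt' (by omega)).1 hn),
        zero_pow hp]
  · obtain ⟨h1, h2⟩ := mem_Icc.1 hn
    have hA : (n : ℝ) ≤ A := (Nat.le_floor_iff' (by omega)).1 h2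
    have hpos : (0 : ℝ) < n := Nat.cast_pos.2 h1
    have hmem : (n : ℝ) ∈ Set.Ioc (-A) A := ⟨by linarith, hA⟩
    rw [hX.measureReal_eq h1, Set.indicator_of_mem hmem, id, mul_comm, mul_one_div]

lemma abs_integral_truncation_sub_log_le [IsFiniteMeasure μ] (hX : HasLurothDistribution μ X)
    (hXm : Measurable X) {A : ℝ} (hA : 1 ≤ A) :
    |μ[truncation (fun ω => (X ω : ℝ)) A] - log A| ≤ 2 := by
  have hmean : μ[truncation (fun ω => (X ω : ℝ)) A] = ∑ n ∈ Icc 1 ⌊A⌋₊, 1 / ((n : ℝ) + 1) := by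
    have h := hX.moment_truncation hXm A one_ne_zero
    simp only [pow_one] at h
    rw [h]
    refine sum_congr rfl fun n hn => ?_
    have : (n : ℝ) ≠ 0 := by have := (mem_Icc.1 hn).1; positivity
    field_simp
  rw [hmean]
  calc |∑ n ∈ Icc 1 ⌊A⌋₊, 1 / ((n : ℝ) + 1) - log A|
      ≤ |∑ n ∈ Icc 1 ⌊A⌋₊, 1 / ((n : ℝ) + 1) - log ⌊A⌋₊| + |log ⌊A⌋₊ - log A| :=
        abs_sub_le _ _ _
    _ ≤ 1 + 1 := add_le_add (abs_sum_Icc_one_div_add_one_sub_log_le _)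
        ((abs_log_natFloor_sub_log_le hA).trans (log_two_lt_d9.le.trans (by norm_num)))
    _ = 2 := by norm_num

lemma variance_truncation_le [IsProbabilityMeasure μ] (hX : HasLurothDistribution μ X)
    (hXm : Measurable X) {A : ℝ} (hA : 0 ≤ A) :
    variance (truncation (fun ω => (X ω : ℝ)) A) μ ≤ A := calc
  _ ≤ μ[truncation (fun ω => (X ω : ℝ)) A ^ 2] :=
    variance_le_expectation_sq (measurable_from_nat.comp hXm).aestronglyMeasurable.truncation
  _ = ∑ n ∈ Icc 1 ⌊A⌋₊, (n : ℝ) ^ 2 / (n * (n + 1)) := hX.moment_truncation hXm A two_ne_zero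
  _ ≤ ∑ n ∈ Icc 1 ⌊A⌋₊, (1 : ℝ) := sum_le_sum fun n hn => by
    have : (0 : ℝ) < n := Nat.cast_pos.2 (mem_Icc.1 hn).1
    rw [div_le_one (by positivity)]
    nlinarith
  _ ≤ A := by simpa using Nat.floor_le hA

end HasLurothDistribution

section IID

variable [IsProbabilityMeasure μ] {X : ℕ → Ω → ℕ}

lemma measureReal_biUnion_lt_le (hXm : ∀ i, Measurable (X i))
    (hX : ∀ i, HasLurothDistribution μ (X i)) (s : Finset ℕ) {t : ℝ} (ht : 0 < t) :
    μ.real (⋃ i ∈ s, {ω | t < X i ω}) ≤ #s / t := calc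
  _ ≤ ∑ i ∈ s, μ.real {ω | t < X i ω} := measureReal_biUnion_finset_le _ _
  _ ≤ ∑ i ∈ s, 1 / t := sum_le_sum fun i _ => (hX i).measureReal_lt_le (hXm i) ht
  _ = #s / t := by rw [sum_const, nsmul_eq_mul, mul_one_div]

lemma abs_integral_sum_truncation_sub_le (hXm : ∀ i, Measurable (X i))
    (hX : ∀ i, HasLurothDistribution μ (X i)) {A : ℝ} (hA : 1 ≤ A) (s : Finset ℕ) :
    |μ[∑ i ∈ s, truncation (fun ω => (X i ω : ℝ)) A] - #s * log A| ≤ 2 * #s := calc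
  _ = |∑ i ∈ s, (μ[truncation (fun ω => (X i ω : ℝ)) A] - log A)| := by
    simp only [Finset.sum_apply]
    have hint (i : ℕ) : Integrable (truncation (fun ω => (X i ω : ℝ)) A) μ :=
      (measurable_from_nat.comp (hXm i)).aestronglyMeasurable.integrable_truncation
    rw [integral_finsetSum _ fun i _ => hint i,
      sum_sub_distrib, sum_const, nsmul_eq_mul]
  _ ≤ ∑ i ∈ s, (2 : ℝ) := (abs_sum_le_sum_abs _ _).trans
    (sum_le_sum fun i _ => (hX i).abs_integral_truncation_sub_log_le (hXm i) hA)
  _ = 2 * #s := by rw [sum_const, nsmul_eq_mul, mul_comm]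

lemma variance_sum_truncation_le (hXm : ∀ i, Measurable (X i)) (hindep : iIndepFun X μ)
    (hX : ∀ i, HasLurothDistribution μ (X i)) {A : ℝ} (hA : 0 ≤ A) (s : Finset ℕ) :
    variance (∑ i ∈ s, truncation (fun ω => (X i ω : ℝ)) A) μ ≤ #s * A := by
  have hY (i : ℕ) : MemLp (truncation (fun ω => (X i ω : ℝ)) A) 2 μ :=
    (measurable_from_nat.comp (hXm i)).aestronglyMeasurable.memLp_truncation
  have hg : Measurable fun n : ℕ => Set.indicator (Set.Ioc (-A) A) id (n : ℝ) :=
    Measurable.of_discrete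
  have hpair : Set.Pairwise s fun i j =>
      truncation (fun ω => (X i ω : ℝ)) A ⟂ᵢ[μ] truncation (fun ω => (X j ω : ℝ)) A :=
    fun i _ j _ hij => (hindep.indepFun hij).comp hg hg
  rw [IndepFun.variance_sum (fun i _ => hY i) hpair]
  calc ∑ i ∈ s, variance (truncation (fun ω => (X i ω : ℝ)) A) μ ≤ ∑ i ∈ s, A :=
        sum_le_sum fun i _ => (hX i).variance_truncation_le (hXm i) hA
    _ = #s * A := by rw [sum_const, nsmul_eq_mul]

lemma measureReal_abs_sub_integral_sum_truncation_ge_le (hXm : ∀ i, Measurable (X i))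
    (hindep : iIndepFun X μ) (hX : ∀ i, HasLurothDistribution μ (X i)) {A : ℝ} (hA : 0 ≤ A)
    (s : Finset ℕ) {c : ℝ} (hc : 0 < c) :
    μ.real {ω | c ≤ |(∑ i ∈ s, truncation (fun ω => (X i ω : ℝ)) A) ω
      - μ[∑ i ∈ s, truncation (fun ω => (X i ω : ℝ)) A]|} ≤ #s * A / c ^ 2 := by
  have hY : MemLp (∑ i ∈ s, truncation (fun ω => (X i ω : ℝ)) A) 2 μ :=
    memLp_finsetSum' _ fun i _ =>
      (measurable_from_nat.comp (hXm i)).aestronglyMeasurable.memLp_truncation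
  refine ENNReal.toReal_le_of_le_ofReal (by positivity)
    ((meas_ge_le_variance_div_sq hY hc).trans (ENNReal.ofReal_le_ofReal ?_))
  gcongr
  exact variance_sum_truncation_le hXm hindep hX hA s

lemma measureReal_trimmed_sum_deviation_le (hXm : ∀ i, Measurable (X i))
    (hindep : iIndepFun X μ) (hX : ∀ i, HasLurothDistribution μ (X i)) {ε : ℝ} (hε : 0 < ε)
    {k : ℕ} (hk : 3 ≤ k) (hlog : 2 + log (log k) ≤ ε / 4 * log k) :
    μ.real {ω | ε < |(((∑ i ∈ range k, X i ω : ℕ) : ℝ)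
        - (((range k).sup fun j => X j ω : ℕ) : ℝ)) / (k * log k) - 1|}
      ≤ (1 / min (ε / 2) 1 + 16 / ε ^ 2) / log k := by
  have hlogk : 1 ≤ log k := by
    rw [le_log_iff_exp_le (by positivity)]
    have : (3 : ℝ) ≤ k := by exact_mod_cast hk
    linarith [exp_one_lt_d9]
  set L := (k : ℝ) * log k with hL
  have hL1 : 1 ≤ L := one_le_mul_of_one_le_of_one_le (Nat.one_le_cast.2 (by omega)) hlogk
  set S := ∑ i ∈ range k, truncation (fun ω => (X i ω : ℝ)) L
  have hmean : |μ[S] - L| ≤ ε / 4 * L := by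
    have h := abs_integral_sum_truncation_sub_le hXm hX hL1 (range k)
    rw [card_range, hL, log_mul (by positivity) (by positivity)] at h
    have hk' := mul_le_mul_of_nonneg_left hlog (Nat.cast_nonneg k : (0 : ℝ) ≤ k)
    have hll : 0 ≤ log (log k) := log_nonneg hlogk
    rw [abs_le] at h ⊢
    constructor <;> nlinarith
  set δ := min (ε / 2) 1
  have hδ : 0 < δ := lt_min (by positivity) one_pos
  calc _ ≤ μ.real ((⋃ i ∈ range k, {ω | δ * L < X i ω}) ∪ {ω | ε / 4 * L ≤ |S ω - μ[S]|}) :=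
        measureReal_mono (trimmed_sum_deviation_subset X k (by positivity) (by positivity)
          (mul_le_of_le_one_left (by positivity) (min_le_right _ _))
          (mul_le_mul_of_nonneg_right (min_le_left _ _) (by positivity)) hmean)
    _ ≤ k / (δ * L) + k * L / (ε / 4 * L) ^ 2 := by
        refine (measureReal_union_le _ _).trans (add_le_add ?_ ?_)
        · simpa using measureReal_biUnion_lt_le hXm hX (range k) (by positivity : 0 < δ * L)
        · have h := measureReal_abs_sub_integral_sum_truncation_ge_le hXm hindep hX
            (by positivity : 0 ≤ L) (range k) (by positivity : 0 < ε / 4 * L)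
          rwa [card_range] at h
    _ = (1 / δ + 16 / ε ^ 2) / log k := by
        rw [hL]
        field_simp
        ring

end IID

end

/-- For an IID sequence `X_1, X_2, …` with the Luroth distribution
`P(X = n) = 1/(n(n+1))`, `S_k = X_1 + ⋯ + X_k` and `M_k = max(X_1, …, X_k)`, the
trimmed sum `(S_k - M_k)/(k log k)` tends to `1` in probability: for every `ε > 0`,
`P(|(S_k - M_k)/(k log k) - 1| > ε) → 0`. -/
theorem trimmed_sum_tendsto_one_in_probability
    {Ω : Type*} [MeasurableSpace Ω] (μ : Measure Ω) [IsProbabilityMeasure μ]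
    (X : ℕ → Ω → ℕ) (hmeas : ∀ i, Measurable (X i))
    (hindep : iIndepFun X μ)
    (hdist : ∀ i, ∀ n : ℕ, 1 ≤ n →
      μ {ω | X i ω = n} = ENNReal.ofReal (1 / (n * (n + 1))))
    (ε : ℝ) (hε : 0 < ε) :
    Filter.Tendsto
      (fun k : ℕ =>
        (μ {ω | ε < |(((∑ i ∈ Finset.range k, X i ω : ℕ) : ℝ)
              - (((Finset.range k).sup fun j => X j ω : ℕ) : ℝ))
            / (k * Real.log k) - 1|}).toReal)
      Filter.atTop (nhds 0) := by
  have hlog : Tendsto (fun k : ℕ => log (k : ℝ)) atTop atTop :=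
    tendsto_log_atTop.comp tendsto_natCast_atTop_atTop
  refine squeeze_zero' (Eventually.of_forall fun k => ENNReal.toReal_nonneg) ?_
    ((tendsto_const_nhds (x := (1 / min (ε / 2) 1 + 16 / ε ^ 2))).div_atTop hlog)
  filter_upwards [eventually_ge_atTop 3, tendsto_natCast_atTop_atTop.eventually
    (eventually_add_log_log_le_mul_log 2 (by positivity : 0 < ε / 4))] with k hk hk'
  exact measureReal_trimmed_sum_deviation_le hmeas hindep hdist hε hk hk'
end
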